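/- arXiv:math/0205327 — 3 statements merged into one kernel-verified Lean document; each statement's English description precedes it below -/
import Mathlib

section
/- Let X be a finite connected vertex-transitive graph (e.g. a Cayley graph of a finite group). If A is a nonempty proper subset of the vertices of X achieving the Cheeger constant, i.e. |∂A|/|A| = h(X) and |A| ≤ |V(X)|/2, then |A| > |V(X)|/4. -/
open Finset

/- The edge boundary of a finset `A` of vertices: the set of edges of `G` with exactly
one endpoint in `A`. -/
open Classical in
noncomputable def edgeBd {V : Type*} [Fintype V] (G : SimpleGraph V) (A : Finset V) :
    Finset (Sym2 V) :=
  G.edgeFinset.filter fun e => ∃ a ∈ A, ∃ b ∉ A, e = s(a, b)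

/- The Cheeger constant of a finite graph:
`h(X) = min over nonempty proper A of |∂A| / min(|A|, |V(X) - A|)`. -/
open Classical in
noncomputable def cheeger {V : Type*} [Fintype V] (G : SimpleGraph V) : ℝ :=
  sInf { r : ℝ | ∃ A : Finset V, A.Nonempty ∧ A ≠ Finset.univ ∧
    r = (edgeBd G A).card / min (A.card : ℝ) ((Fintype.card V : ℝ) - A.card) }

namespace CheegerAux

variable {V : Type*} [Fintype V] (G : SimpleGraph V)

def bpred (S : Finset V) (e : Sym2 V) : Prop := ∃ a ∈ S, ∃ b ∉ S, e = s(a, b)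

lemma bpred_iff (S : Finset V) (x y : V) :
    bpred S s(x, y) ↔ (x ∈ S ∧ y ∉ S) ∨ (y ∈ S ∧ x ∉ S) := by
  constructor
  · rintro ⟨a, ha, b, hb, hab⟩
    rw [Sym2.eq_iff] at hab
    rcases hab with ⟨rfl, rfl⟩ | ⟨rfl, rfl⟩
    · exact Or.inl ⟨ha, hb⟩
    · exact Or.inr ⟨ha, hb⟩
  · rintro (⟨hx, hy⟩ | ⟨hy, hx⟩)
    · exact ⟨x, hx, y, hy, rfl⟩
    · exact ⟨y, hy, x, hx, Sym2.eq_swap.symm⟩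

open Classical in
lemma card_edgeBd (S : Finset V) :
    (edgeBd G S).card = ∑ e ∈ G.edgeFinset, if bpred S e then 1 else 0 := by
  classical
  rw [edgeBd, Finset.card_filter]
  exact Finset.sum_congr rfl fun e _ => by unfold bpred; congr

open Classical in
lemma pointwise [DecidableEq V] (A B : Finset V) (e : Sym2 V) :
    (if bpred (A ∩ B) e then 1 else 0) + (if bpred (A ∪ B) e then 1 else 0) ≤
      (if bpred A e then 1 else 0) + (if bpred B e then 1 else 0) := by
  induction e using Sym2.ind with
  | _ x y =>
    simp only [bpred_iff, Finset.mem_inter, Finset.mem_union]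
    by_cases hxA : x ∈ A <;> by_cases hyA : y ∈ A <;> by_cases hxB : x ∈ B <;>
      by_cases hyB : y ∈ B <;> simp [hxA, hyA, hxB, hyB]

lemma submod [DecidableEq V] (A B : Finset V) :
    (edgeBd G (A ∩ B)).card + (edgeBd G (A ∪ B)).card ≤
      (edgeBd G A).card + (edgeBd G B).card := by
  classical
  simp only [card_edgeBd, ← Finset.sum_add_distrib]
  exact Finset.sum_le_sum fun e _ => pointwise A B e

lemma submod_strict [DecidableEq V] (A B : Finset V) {u v : V} (hadj : G.Adj u v)
    (huA : u ∈ A) (huB : u ∉ B) (hvB : v ∈ B) (hvA : v ∉ A) :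
    (edgeBd G (A ∩ B)).card + (edgeBd G (A ∪ B)).card + 1 ≤
      (edgeBd G A).card + (edgeBd G B).card := by
  classical
  simp only [card_edgeBd, ← Finset.sum_add_distrib]
  have hlt : ∑ e ∈ G.edgeFinset, ((if bpred (A ∩ B) e then 1 else 0) + (if bpred (A ∪ B) e then 1 else 0)) <
      ∑ e ∈ G.edgeFinset, ((if bpred A e then 1 else 0) + (if bpred B e then 1 else 0)) := by
    apply Finset.sum_lt_sum (fun e _ => pointwise A B e)
    refine ⟨s(u, v), SimpleGraph.mem_edgeFinset.2 hadj, ?_⟩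
    have h1 : ¬ bpred (A ∩ B) s(u, v) := by
      simp [bpred_iff, huB, hvA]
    have h2 : ¬ bpred (A ∪ B) s(u, v) := by
      simp [bpred_iff, huA, hvB]
    have h3 : bpred A s(u, v) := (bpred_iff A u v).2 (Or.inl ⟨huA, hvA⟩)
    have h4 : bpred B s(u, v) := (bpred_iff B u v).2 (Or.inr ⟨hvB, huB⟩)
    simp [h1, h2, h3, h4]
  omega

lemma mem_edgeBd (S : Finset V) (x y : V) :
    s(x, y) ∈ edgeBd G S ↔ G.Adj x y ∧ ((x ∈ S ∧ y ∉ S) ∨ (y ∈ S ∧ x ∉ S)) := by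
  classical
  unfold edgeBd
  rw [Finset.mem_filter, SimpleGraph.mem_edgeFinset, SimpleGraph.mem_edgeSet]
  exact and_congr_right fun _ => bpred_iff S x y

lemma edgeBd_image [DecidableEq V] (φ : G ≃g G) (B : Finset V) :
    (edgeBd G (B.image ⇑φ)).card = (edgeBd G B).card := by
  classical
  have hmem : ∀ (x y : V) (S : Finset V), s(x, y) ∈ edgeBd G S ↔
      G.Adj x y ∧ ((x ∈ S ∧ y ∉ S) ∨ (y ∈ S ∧ x ∉ S)) := fun x y S => mem_edgeBd G S x y
  have himg : ∀ z : V, φ z ∈ B.image ⇑φ ↔ z ∈ B := by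
    intro z
    constructor
    · intro h
      obtain ⟨w, hw, hwz⟩ := Finset.mem_image.1 h
      rwa [← φ.injective hwz]
    · exact fun h => Finset.mem_image_of_mem _ h
  have key : ∀ e : Sym2 V, e ∈ edgeBd G B → Sym2.map ⇑φ e ∈ edgeBd G (B.image ⇑φ) := by
    intro e he
    induction e using Sym2.ind with
    | _ x y =>
      rw [Sym2.map_pair_eq]
      rw [hmem] at he ⊢
      obtain ⟨hadj, hc⟩ := he
      refine ⟨φ.map_adj_iff.2 hadj, ?_⟩
      rcases hc with ⟨h1, h2⟩ | ⟨h1, h2⟩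
      · exact Or.inl ⟨(himg x).2 h1, fun h => h2 ((himg y).1 h)⟩
      · exact Or.inr ⟨(himg y).2 h1, fun h => h2 ((himg x).1 h)⟩
  have key2 : ∀ e : Sym2 V, e ∈ edgeBd G (B.image ⇑φ) → Sym2.map ⇑φ.symm e ∈ edgeBd G B := by
    intro e he
    induction e using Sym2.ind with
    | _ x y =>
      rw [Sym2.map_pair_eq]
      rw [hmem] at he ⊢
      obtain ⟨hadj, hc⟩ := he
      have hs : ∀ z : V, φ.symm z ∈ B ↔ z ∈ B.image ⇑φ := by
        intro z
        rw [← himg (φ.symm z)]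
        simp
      refine ⟨?_, ?_⟩
      · have := φ.symm.map_adj_iff (v := x) (w := y)
        exact this.2 hadj
      · rcases hc with ⟨h1, h2⟩ | ⟨h1, h2⟩
        · exact Or.inl ⟨(hs x).2 h1, fun h => h2 ((hs y).1 h)⟩
        · exact Or.inr ⟨(hs y).2 h1, fun h => h2 ((hs x).1 h)⟩
  refine Finset.card_bij' (fun e _ => Sym2.map ⇑φ.symm e) (fun e _ => Sym2.map ⇑φ e)
    (fun e he => key2 e he) (fun e he => key e he) ?_ ?_
  · intro e he
    induction e using Sym2.ind with
    | _ x y => simp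
  · intro e he
    induction e using Sym2.ind with
    | _ x y => simp

lemma cheeger_mul_le (B : Finset V)
    (hhalf : (B.card : ℝ) ≤ (Fintype.card V : ℝ) / 2) (hV : 0 < Fintype.card V) :
    cheeger G * (B.card : ℝ) ≤ ((edgeBd G B).card : ℝ) := by
  rcases B.eq_empty_or_nonempty with rfl | hB
  · simp
  · have hpos : (0:ℝ) < B.card := by exact_mod_cast Finset.card_pos.2 hB
    have hnR : (0:ℝ) < Fintype.card V := by exact_mod_cast hV
    have hne : B ≠ Finset.univ := by
      rw [← Finset.card_lt_iff_ne_univ]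
      have : (B.card : ℝ) < Fintype.card V := by linarith
      exact_mod_cast this
    have hbdd : BddBelow { r : ℝ | ∃ A : Finset V, A.Nonempty ∧ A ≠ Finset.univ ∧
        r = (edgeBd G A).card / min (A.card : ℝ) ((Fintype.card V : ℝ) - A.card) } := by
      refine ⟨0, ?_⟩
      rintro r ⟨A, hA, hAne, rfl⟩
      have h1 : (0:ℝ) < A.card := by exact_mod_cast Finset.card_pos.2 hA
      have h2 : (0:ℝ) < (Fintype.card V : ℝ) - A.card := by
        have : A.card < Fintype.card V := (Finset.card_lt_iff_ne_univ A).2 hAne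
        have : (A.card : ℝ) < Fintype.card V := by exact_mod_cast this
        linarith
      exact div_nonneg (by positivity) (le_of_lt (lt_min h1 h2))
    have hmem : (((edgeBd G B).card : ℝ) / min (B.card : ℝ) ((Fintype.card V : ℝ) - B.card)) ∈
        { r : ℝ | ∃ A : Finset V, A.Nonempty ∧ A ≠ Finset.univ ∧
          r = (edgeBd G A).card / min (A.card : ℝ) ((Fintype.card V : ℝ) - A.card) } :=
      ⟨B, hB, hne, rfl⟩
    have h1 : cheeger G ≤ ((edgeBd G B).card : ℝ) / min (B.card : ℝ) ((Fintype.card V : ℝ) - B.card) :=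
      csInf_le hbdd hmem
    rw [min_eq_left (by linarith)] at h1
    calc cheeger G * (B.card : ℝ) ≤ (((edgeBd G B).card : ℝ) / B.card) * B.card :=
          mul_le_mul_of_nonneg_right h1 hpos.le
      _ = ((edgeBd G B).card : ℝ) := div_mul_cancel₀ _ hpos.ne'

lemma exists_boundary (hconn : G.Connected) (C : Finset V) (hC : C.Nonempty)
    (hne : C ≠ Finset.univ) : ∃ u ∈ C, ∃ v, v ∉ C ∧ G.Adj u v := by
  obtain ⟨u₀, hu₀⟩ := hC
  obtain ⟨v₀, hv₀⟩ : ∃ v, v ∉ C := by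
    by_contra h
    push_neg at h
    exact hne (Finset.eq_univ_iff_forall.2 h)
  obtain ⟨w⟩ := hconn.preconnected u₀ v₀
  obtain ⟨d, _, h1, h2⟩ := w.exists_boundary_dart (↑C : Set V) (by simpa) (by simpa)
  exact ⟨d.toProd.1, by simpa using h1, d.toProd.2, by simpa using h2, d.adj⟩

lemma key (hconn : G.Connected) (htrans : ∀ u v : V, ∃ φ : G ≃g G, φ u = v) :
    ∀ (k : ℕ) (B : Finset V), B.card = k → B.Nonempty →
      (B.card : ℝ) ≤ (Fintype.card V : ℝ) / 4 →
      ((edgeBd G B).card : ℝ) = cheeger G * (B.card : ℝ) → False := by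
  classical
  intro k
  induction k using Nat.strong_induction_on with
  | _ k IH =>
  rintro B rfl hB hquarter hmin
  obtain ⟨b0, hb0⟩ := hB
  have hV : 0 < Fintype.card V := Fintype.card_pos_iff.2 ⟨b0⟩
  have hnR : (0:ℝ) < Fintype.card V := by exact_mod_cast hV
  have hBpos : (0:ℝ) < B.card := by exact_mod_cast Finset.card_pos.2 ⟨b0, hb0⟩
  have hBne : B ≠ Finset.univ := by
    rw [← Finset.card_lt_iff_ne_univ]
    have : (B.card : ℝ) < Fintype.card V := by linarith
    exact_mod_cast this
  obtain ⟨u, huB, v, hvB, hadj⟩ := exists_boundary G hconn B ⟨b0, hb0⟩ hBne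
  obtain ⟨φ, hφ⟩ := htrans u v
  set B' := B.image ⇑φ with hB'def
  have hcard' : B'.card = B.card := Finset.card_image_of_injective _ φ.injective
  have hcard'R : (B'.card : ℝ) = B.card := by exact_mod_cast hcard'
  have hbd' : ((edgeBd G B').card : ℝ) = cheeger G * (B.card : ℝ) := by
    rw [hB'def, edgeBd_image]; exact hmin
  have hvB' : v ∈ B' := hφ ▸ Finset.mem_image_of_mem _ huB
  have hUcardN : (B ∪ B').card ≤ B.card + B'.card := Finset.card_union_le _ _
  have hUcard : ((B ∪ B').card : ℝ) ≤ (Fintype.card V : ℝ) / 2 := by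
    have : ((B ∪ B').card : ℝ) ≤ (B.card : ℝ) + B'.card := by exact_mod_cast hUcardN
    linarith
  have hIcardN : (B ∩ B').card ≤ B.card := Finset.card_le_card (Finset.inter_subset_left)
  have hIcardR : ((B ∩ B').card : ℝ) ≤ B.card := by exact_mod_cast hIcardN
  have hIcard : ((B ∩ B').card : ℝ) ≤ (Fintype.card V : ℝ) / 2 := by linarith
  have hI := cheeger_mul_le G (B ∩ B') hIcard hV
  have hU := cheeger_mul_le G (B ∪ B') hUcard hV
  have hsumN := Finset.card_inter_add_card_union B B'
  have hsum : ((B ∩ B').card : ℝ) + ((B ∪ B').card : ℝ) = (B.card : ℝ) + B'.card := by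
    exact_mod_cast hsumN
  have hmul : cheeger G * ((B ∩ B').card : ℝ) + cheeger G * ((B ∪ B').card : ℝ) =
      cheeger G * (B.card : ℝ) + cheeger G * (B.card : ℝ) := by
    rw [← mul_add, hsum, hcard'R, mul_add]
  by_cases huB' : u ∈ B'
  · have hne' : B' ≠ B := fun h => hvB (h ▸ hvB')
    have hlt : (B ∩ B').card < B.card := by
      rcases lt_or_eq_of_le hIcardN with h | h
      · exact h
      · exfalso
        have hIeq : B ∩ B' = B := Finset.eq_of_subset_of_card_le Finset.inter_subset_left (le_of_eq h.symm)
        have hsub : B ⊆ B' := fun x hx => (Finset.mem_inter.1 (hIeq ▸ hx)).2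
        exact hne' (Finset.eq_of_subset_of_card_le hsub (le_of_eq hcard')).symm
    have hsubR : ((edgeBd G (B ∩ B')).card : ℝ) + ((edgeBd G (B ∪ B')).card : ℝ) ≤
        ((edgeBd G B).card : ℝ) + ((edgeBd G B').card : ℝ) := by
      exact_mod_cast submod G B B'
    have hIeq : ((edgeBd G (B ∩ B')).card : ℝ) = cheeger G * ((B ∩ B').card : ℝ) :=
      le_antisymm (by linarith) hI
    exact IH (B ∩ B').card hlt (B ∩ B') rfl ⟨u, Finset.mem_inter.2 ⟨huB, huB'⟩⟩
      (by linarith) hIeq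
  · have hsubR : ((edgeBd G (B ∩ B')).card : ℝ) + ((edgeBd G (B ∪ B')).card : ℝ) + 1 ≤
        ((edgeBd G B).card : ℝ) + ((edgeBd G B').card : ℝ) := by
      exact_mod_cast submod_strict G B B' hadj huB huB' hvB' hvB
    linarith

end CheegerAux

/-- In a finite connected vertex-transitive graph, any nonempty proper
vertex subset `A` with `|A| ≤ |V|/2` achieving the Cheeger constant (so
`|∂A|/|A| = h(X)`) satisfies `|A| > |V|/4`. -/
theorem cheeger_minimizer_large {V : Type*} [Fintype V] (G : SimpleGraph V)
    (hconn : G.Connected)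
    (htrans : ∀ u v : V, ∃ φ : G ≃g G, φ u = v)
    (A : Finset V) (hA : A.Nonempty) (hAne : A ≠ Finset.univ)
    (hhalf : (A.card : ℝ) ≤ (Fintype.card V : ℝ) / 2)
    (hach : ((edgeBd G A).card : ℝ) / (A.card : ℝ) = cheeger G) :
    (Fintype.card V : ℝ) / 4 < (A.card : ℝ) := by
  by_contra hcon
  push_neg at hcon
  have hpos : (0:ℝ) < A.card := by exact_mod_cast Finset.card_pos.2 hA
  rw [div_eq_iff hpos.ne'] at hach
  exact CheegerAux.key G hconn htrans A.card A rfl hA hcon hach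
end

section
/- Let X be the Cayley graph of a finite group with respect to a finite generating set. Let A be a nonempty subset of V(X) with |∂A|/|A| = h(X) and |A| ≤ |V(X)|/2. Then the induced subgraph on A is connected and the induced subgraph on the complement V(X)∖A is connected. -/
open Finset

/- The Cayley graph of a group `G` with respect to a set `S` of generators: `x` is
joined to `y` iff `y = x·s` or `x = y·s` for some `s ∈ S`. -/
def cayley (G : Type*) [Group G] (S : Set G) : SimpleGraph G where
  Adj x y := x ≠ y ∧ (x⁻¹ * y ∈ S ∨ y⁻¹ * x ∈ S)
  symm := ⟨fun x y h => ⟨h.1.symm, h.2.symm⟩⟩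
  loopless := ⟨fun x h => h.1 rfl⟩

/-! ### Auxiliary development -/

section EPairs

variable {V : Type*} [Fintype V] [DecidableEq V] (Γ : SimpleGraph V)

open Classical in
/-- The number of ordered adjacent pairs in `X ×ˢ Y`. -/
noncomputable def epairs (X Y : Finset V) : ℕ :=
  ((X ×ˢ Y).filter fun p => Γ.Adj p.1 p.2).card

open Classical in
lemma epairs_comm (X Y : Finset V) : epairs Γ X Y = epairs Γ Y X := by
  classical
  unfold epairs
  apply Finset.card_bij (fun p _ => (p.2, p.1))
  · intro p hp
    simp only [Finset.mem_filter, Finset.mem_product] at hp ⊢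
    exact ⟨⟨hp.1.2, hp.1.1⟩, hp.2.symm⟩
  · intro p hp q hq h
    simp only [Prod.mk.injEq] at h
    exact Prod.ext h.2 h.1
  · intro p hp
    simp only [Finset.mem_filter, Finset.mem_product] at hp
    exact ⟨(p.2, p.1), by simp [Finset.mem_filter, hp.1.1, hp.1.2, hp.2.symm], rfl⟩

open Classical in
lemma epairs_union_left {X Y : Finset V} (h : Disjoint X Y) (Z : Finset V) :
    epairs Γ (X ∪ Y) Z = epairs Γ X Z + epairs Γ Y Z := by
  classical
  unfold epairs
  rw [Finset.union_product, Finset.filter_union, Finset.card_union_of_disjoint]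
  exact Finset.disjoint_filter_filter (Finset.disjoint_product.mpr (Or.inl h))

lemma epairs_union_right {Y Z : Finset V} (h : Disjoint Y Z) (X : Finset V) :
    epairs Γ X (Y ∪ Z) = epairs Γ X Y + epairs Γ X Z := by
  rw [epairs_comm, epairs_union_left Γ h, epairs_comm Γ Y X, epairs_comm Γ Z X]

open Classical in
lemma epairs_eq_zero_iff {X Y : Finset V} :
    epairs Γ X Y = 0 ↔ ∀ x ∈ X, ∀ y ∈ Y, ¬Γ.Adj x y := by
  classical
  unfold epairs
  rw [Finset.card_eq_zero, Finset.filter_eq_empty_iff]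
  constructor
  · intro h x hx y hy hadj
    exact h (show (x, y) ∈ _ ×ˢ _ from Finset.mem_product.mpr ⟨hx, hy⟩) hadj
  · intro h p hp hadj
    rw [Finset.mem_product] at hp
    exact h p.1 hp.1 p.2 hp.2 hadj
open Classical in
lemma edgeBd_card_eq (A : Finset V) :
    (edgeBd Γ A).card = epairs Γ A Aᶜ := by
  classical
  unfold edgeBd epairs
  symm
  apply Finset.card_bij (fun p _ => s(p.1, p.2))
  · intro p hp
    simp only [Finset.mem_filter, Finset.mem_product, Finset.mem_compl] at hp
    simp only [Finset.mem_filter, SimpleGraph.mem_edgeFinset, SimpleGraph.mem_edgeSet]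
    exact ⟨hp.2, p.1, hp.1.1, p.2, hp.1.2, rfl⟩
  · intro p hp q hq h
    simp only [Finset.mem_filter, Finset.mem_product, Finset.mem_compl] at hp hq
    rcases Sym2.eq_iff.mp h with ⟨h1, h2⟩ | ⟨h1, h2⟩
    · exact Prod.ext h1 h2
    · exact absurd (h2 ▸ hq.1.1) hp.1.2
  · intro e he
    simp only [Finset.mem_filter, SimpleGraph.mem_edgeFinset, SimpleGraph.mem_edgeSet] at he
    obtain ⟨hadj, a, ha, b, hb, rfl⟩ := he
    refine ⟨(a, b), ?_, rfl⟩
    simp only [Finset.mem_filter, Finset.mem_product, Finset.mem_compl]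
    exact ⟨⟨ha, hb⟩, hadj⟩

end EPairs

open Classical in
/-- Edge boundary size, counted as ordered pairs. -/
noncomputable def eB {V : Type*} [Fintype V] [DecidableEq V] (Γ : SimpleGraph V)
    (X : Finset V) : ℕ := epairs Γ X Xᶜ

section Submod

variable {V : Type*} [Fintype V] [DecidableEq V] (Γ : SimpleGraph V)

lemma eB_submod (X Y : Finset V) :
    eB Γ (X ∩ Y) + eB Γ (X ∪ Y) ≤ eB Γ X + eB Γ Y := by
  classical
  set P1 := X ∩ Y with hP1
  set P2 := X \ Y with hP2
  set P3 := Y \ X with hP3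
  set P4 := (X ∪ Y)ᶜ with hP4
  have d12 : Disjoint P1 P2 := by
    rw [Finset.disjoint_left]; intro a h1 h2
    simp only [hP1, hP2, Finset.mem_inter, Finset.mem_sdiff] at h1 h2; tauto
  have d13 : Disjoint P1 P3 := by
    rw [Finset.disjoint_left]; intro a h1 h2
    simp only [hP1, hP3, Finset.mem_inter, Finset.mem_sdiff] at h1 h2; tauto
  have d14 : Disjoint P1 P4 := by
    rw [Finset.disjoint_left]; intro a h1 h2
    simp only [hP1, hP4, Finset.mem_inter, Finset.mem_compl, Finset.mem_union] at h1 h2; tauto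
  have d23 : Disjoint P2 P3 := by
    rw [Finset.disjoint_left]; intro a h1 h2
    simp only [hP2, hP3, Finset.mem_sdiff] at h1 h2; tauto
  have d24 : Disjoint P2 P4 := by
    rw [Finset.disjoint_left]; intro a h1 h2
    simp only [hP2, hP4, Finset.mem_sdiff, Finset.mem_compl, Finset.mem_union] at h1 h2; tauto
  have d34 : Disjoint P3 P4 := by
    rw [Finset.disjoint_left]; intro a h1 h2
    simp only [hP3, hP4, Finset.mem_sdiff, Finset.mem_compl, Finset.mem_union] at h1 h2; tauto
  have hX : X = P1 ∪ P2 := by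
    ext a; simp only [hP1, hP2, Finset.mem_union, Finset.mem_inter, Finset.mem_sdiff]; tauto
  have hXc : Xᶜ = P3 ∪ P4 := by
    ext a
    simp only [hP3, hP4, Finset.mem_compl, Finset.mem_union, Finset.mem_sdiff]; tauto
  have hY : Y = P1 ∪ P3 := by
    ext a; simp only [hP1, hP3, Finset.mem_union, Finset.mem_inter, Finset.mem_sdiff]; tauto
  have hYc : Yᶜ = P2 ∪ P4 := by
    ext a
    simp only [hP2, hP4, Finset.mem_compl, Finset.mem_union, Finset.mem_sdiff]; tauto
  have hIc : (X ∩ Y)ᶜ = P2 ∪ (P3 ∪ P4) := by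
    ext a
    simp only [hP2, hP3, hP4, Finset.mem_compl, Finset.mem_union, Finset.mem_inter,
      Finset.mem_sdiff]
    tauto
  have hU : X ∪ Y = P1 ∪ (P2 ∪ P3) := by
    ext a
    simp only [hP1, hP2, hP3, Finset.mem_union, Finset.mem_inter, Finset.mem_sdiff]; tauto
  have eBX : eB Γ X = epairs Γ P1 P3 + epairs Γ P1 P4 +
      (epairs Γ P2 P3 + epairs Γ P2 P4) := by
    rw [eB, hXc]
    conv_lhs => rw [hX]
    rw [epairs_union_left Γ d12, epairs_union_right Γ d34, epairs_union_right Γ d34]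
  have eBY : eB Γ Y = epairs Γ P1 P2 + epairs Γ P1 P4 +
      (epairs Γ P3 P2 + epairs Γ P3 P4) := by
    rw [eB, hYc]
    conv_lhs => rw [hY]
    rw [epairs_union_left Γ d13, epairs_union_right Γ d24, epairs_union_right Γ d24]
  have eBI : eB Γ (X ∩ Y) = epairs Γ P1 P2 + (epairs Γ P1 P3 + epairs Γ P1 P4) := by
    rw [eB, hIc, ← hP1, epairs_union_right Γ (Finset.disjoint_union_right.mpr ⟨d23, d24⟩),
      epairs_union_right Γ d34]
  have eBU : eB Γ (X ∪ Y) = epairs Γ P1 P4 + (epairs Γ P2 P4 + epairs Γ P3 P4) := by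
    have : (X ∪ Y)ᶜ = P4 := rfl
    rw [eB, this]
    conv_lhs => rw [hU]
    rw [epairs_union_left Γ (Finset.disjoint_union_right.mpr ⟨d12, d13⟩),
      epairs_union_left Γ d23]
  rw [eBX, eBY, eBI, eBU, epairs_comm Γ P3 P2]
  omega

lemma eB_union_of_disjoint {X Y : Finset V} (h : Disjoint X Y) :
    eB Γ (X ∪ Y) + 2 * epairs Γ X Y = eB Γ X + eB Γ Y := by
  classical
  set P3 := (X ∪ Y)ᶜ with hP3
  have hXc : Xᶜ = Y ∪ P3 := by
    ext a
    simp only [hP3, Finset.mem_compl, Finset.mem_union]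
    constructor
    · intro ha; by_cases hy : a ∈ Y; · exact Or.inl hy
      · exact Or.inr (by simp [ha, hy])
    · intro ha hx
      rcases ha with hy | hp
      · exact (Finset.disjoint_left.mp h hx) hy
      · tauto
  have hYc : Yᶜ = X ∪ P3 := by
    ext a
    simp only [hP3, Finset.mem_compl, Finset.mem_union]
    constructor
    · intro ha; by_cases hx : a ∈ X; · exact Or.inl hx
      · exact Or.inr (by simp [ha, hx])
    · intro ha hy
      rcases ha with hx | hp
      · exact (Finset.disjoint_left.mp h hx) hy
      · tauto
  have dX3 : Disjoint X P3 := by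
    rw [Finset.disjoint_left]; intro a h1 h2
    simp only [hP3, Finset.mem_compl, Finset.mem_union] at h2; tauto
  have dY3 : Disjoint Y P3 := by
    rw [Finset.disjoint_left]; intro a h1 h2
    simp only [hP3, Finset.mem_compl, Finset.mem_union] at h2; tauto
  have e1 : eB Γ (X ∪ Y) = epairs Γ X P3 + epairs Γ Y P3 := by
    rw [eB, ← hP3, epairs_union_left Γ h]
  have e2 : eB Γ X = epairs Γ X Y + epairs Γ X P3 := by
    rw [eB, hXc, epairs_union_right Γ dY3]
  have e3 : eB Γ Y = epairs Γ Y X + epairs Γ Y P3 := by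
    rw [eB, hYc, epairs_union_right Γ dX3]
  rw [e1, e2, e3, epairs_comm Γ Y X]
  omega

end Submod

section CheegerBounds

variable {V : Type*} [Fintype V] [DecidableEq V] (Γ : SimpleGraph V)

lemma cheeger_set_bddBelow :
    BddBelow { r : ℝ | ∃ A : Finset V, A.Nonempty ∧ A ≠ Finset.univ ∧
      r = (edgeBd Γ A).card / min (A.card : ℝ) ((Fintype.card V : ℝ) - A.card) } := by
  refine ⟨0, fun r hr => ?_⟩
  obtain ⟨A, hA1, hA2, rfl⟩ := hr
  apply div_nonneg (by positivity)
  refine le_min (by positivity) ?_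
  have := Finset.card_le_univ A
  have : (A.card : ℝ) ≤ (Fintype.card V : ℝ) := by exact_mod_cast this
  linarith

lemma cheeger_le_ratio (A : Finset V) (h1 : A.Nonempty) (h2 : A ≠ Finset.univ) :
    cheeger Γ ≤ (eB Γ A : ℝ) / min (A.card : ℝ) ((Fintype.card V : ℝ) - A.card) := by
  unfold eB
  rw [← edgeBd_card_eq]
  exact csInf_le (cheeger_set_bddBelow Γ) ⟨A, h1, h2, rfl⟩

lemma minSel_pos (A : Finset V) (h1 : A.Nonempty) (h2 : A ≠ Finset.univ) :
    0 < min (A.card : ℝ) ((Fintype.card V : ℝ) - A.card) := by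
  refine lt_min (by exact_mod_cast h1.card_pos) ?_
  have : A.card < Fintype.card V := by
    rw [← Finset.card_univ]
    exact Finset.card_lt_card (Finset.lt_iff_ssubset.mp
      (lt_of_le_of_ne (Finset.le_iff_subset.mpr (Finset.subset_univ A)) h2))
  have : (A.card : ℝ) < (Fintype.card V : ℝ) := by exact_mod_cast this
  linarith

lemma eB_ge (A : Finset V) (h1 : A.Nonempty) (h2 : A ≠ Finset.univ) :
    cheeger Γ * min (A.card : ℝ) ((Fintype.card V : ℝ) - A.card) ≤ (eB Γ A : ℝ) :=
  (le_div_iff₀ (minSel_pos A h1 h2)).mp (cheeger_le_ratio Γ A h1 h2)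

end CheegerBounds

section Cayley

variable {G : Type*} [Group G] [Fintype G] [DecidableEq G] (S : Finset G)

lemma closed_eq_univ (hgen : Subgroup.closure (S : Set G) = ⊤) (A : Finset G)
    (hne : A.Nonempty)
    (hcl : ∀ a ∈ A, ∀ b, (cayley G (S : Set G)).Adj a b → b ∈ A) : A = Finset.univ := by
  have key : ∀ x ∈ Subgroup.closure (S : Set G), ∀ a ∈ A, a * x ∈ A := by
    intro x hx
    induction hx using Subgroup.closure_induction with
    | mem s hs =>
      intro a ha
      by_cases h : a * s = a
      · rw [h]; exact ha
      · refine hcl a ha (a * s) ⟨fun e => h e.symm, Or.inl ?_⟩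
        simpa using hs
    | one => intro a ha; simpa using ha
    | mul x y hx hy px py =>
      intro a ha
      rw [← mul_assoc]
      exact py _ (px a ha)
    | inv x hx px =>
      intro a ha
      have hsub : A.image (· * x) ⊆ A := by
        intro b hb
        obtain ⟨c, hc, rfl⟩ := Finset.mem_image.mp hb
        exact px c hc
      have hcard : A.card ≤ (A.image (· * x)).card := by
        rw [Finset.card_image_of_injective _ (mul_left_injective x)]
      have himg : A.image (· * x) = A := Finset.eq_of_subset_of_card_le hsub hcard
      have : a ∈ A.image (· * x) := himg.symm ▸ ha
      obtain ⟨c, hc, hcx⟩ := Finset.mem_image.mp this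
      have : a * x⁻¹ = c := by
        rw [← hcx]; simp
      rw [this]; exact hc
  obtain ⟨a₀, ha₀⟩ := hne
  ext g
  simp only [Finset.mem_univ, iff_true]
  have hg : a₀⁻¹ * g ∈ Subgroup.closure (S : Set G) := by rw [hgen]; trivial
  have := key _ hg a₀ ha₀
  rwa [mul_inv_cancel_left] at this

lemma eB_zero_univ (hgen : Subgroup.closure (S : Set G) = ⊤) (A : Finset G)
    (hne : A.Nonempty) (h : eB (cayley G (S : Set G)) A = 0) : A = Finset.univ := by
  refine closed_eq_univ S hgen A hne ?_
  intro a ha b hadj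
  by_contra hb
  have := (epairs_eq_zero_iff _).mp h a ha b (Finset.mem_compl.mpr hb)
  exact this hadj

/-- Left translation of a finset. -/
def gmul (g : G) (X : Finset G) : Finset G := X.image (g * ·)

lemma mem_gmul {g : G} {X : Finset G} {x : G} : x ∈ gmul g X ↔ g⁻¹ * x ∈ X := by
  unfold gmul
  simp only [Finset.mem_image]
  constructor
  · rintro ⟨a, ha, rfl⟩; simpa using ha
  · intro h; exact ⟨g⁻¹ * x, h, by group⟩

lemma card_gmul (g : G) (X : Finset G) : (gmul g X).card = X.card :=
  Finset.card_image_of_injective _ (mul_right_injective g)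

lemma gmul_compl (g : G) (X : Finset G) : (gmul g X)ᶜ = gmul g Xᶜ := by
  ext x
  simp only [Finset.mem_compl, mem_gmul]

lemma cayley_adj_gmul (g x y : G) :
    (cayley G (S : Set G)).Adj (g * x) (g * y) ↔ (cayley G (S : Set G)).Adj x y := by
  have e1 : (g * x)⁻¹ * (g * y) = x⁻¹ * y := by group
  have e2 : (g * y)⁻¹ * (g * x) = y⁻¹ * x := by group
  show ((g * x ≠ g * y) ∧ _) ↔ _
  rw [e1, e2, ne_eq, mul_right_inj]
  rfl

open Classical in
lemma epairs_gmul (g : G) (X Y : Finset G) :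
    epairs (cayley G (S : Set G)) (gmul g X) (gmul g Y)
      = epairs (cayley G (S : Set G)) X Y := by
  classical
  unfold epairs
  symm
  apply Finset.card_bij (fun p _ => (g * p.1, g * p.2))
  · intro p hp
    simp only [Finset.mem_filter, Finset.mem_product] at hp ⊢
    refine ⟨⟨mem_gmul.mpr (by simpa using hp.1.1), mem_gmul.mpr (by simpa using hp.1.2)⟩, ?_⟩
    exact (cayley_adj_gmul S g p.1 p.2).mpr hp.2
  · intro p hp q hq h
    simp only [Prod.mk.injEq, mul_right_inj] at h
    exact Prod.ext h.1 h.2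
  · intro p hp
    simp only [Finset.mem_filter, Finset.mem_product, mem_gmul] at hp
    refine ⟨(g⁻¹ * p.1, g⁻¹ * p.2), ?_, by simp⟩
    simp only [Finset.mem_filter, Finset.mem_product]
    refine ⟨⟨hp.1.1, hp.1.2⟩, ?_⟩
    have := hp.2
    rwa [show p.1 = g * (g⁻¹ * p.1) by group, show p.2 = g * (g⁻¹ * p.2) by group,
      cayley_adj_gmul] at this

lemma eB_gmul (g : G) (X : Finset G) :
    eB (cayley G (S : Set G)) (gmul g X) = eB (cayley G (S : Set G)) X := by
  rw [eB, gmul_compl, epairs_gmul, eB]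

end Cayley

section NoSmall

variable {G : Type*} [Group G] [Fintype G] [DecidableEq G] (S : Finset G)

theorem no_small (hgen : Subgroup.closure (S : Set G) = ⊤)
    (hpos : 0 < cheeger (cayley G (S : Set G))) (b : ℕ) :
    ∀ X : Finset G, X.card = b → X.Nonempty →
      4 * X.card ≤ Fintype.card G →
      ((eB (cayley G (S : Set G)) X : ℝ) = cheeger (cayley G (S : Set G)) * X.card) →
      False := by
  induction b using Nat.strong_induction_on with
  | _ b ih =>
    intro X hcard hne hsize hmin
    set Γ := cayley G (S : Set G) with hΓ
    set h := cheeger Γ with hh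
    set n := Fintype.card G with hn
    have hb1 : 1 ≤ X.card := hne.card_pos
    have hXlt : X.card < n := by omega
    have hXuniv : X ≠ Finset.univ := by
      intro hX
      have : X.card = n := by rw [hX, Finset.card_univ]
      omega
    -- Step A: every translate equals X or is disjoint from X
    have stepA : ∀ g : G, gmul g X = X ∨ Disjoint (gmul g X) X := by
      intro g
      by_contra hcon
      push_neg at hcon
      obtain ⟨hne', hnd⟩ := hcon
      rw [Finset.not_disjoint_iff_nonempty_inter] at hnd
      set Y := gmul g X with hY
      have hYcard : Y.card = X.card := card_gmul g X
      have hYeB : eB Γ Y = eB Γ X := eB_gmul S g X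
      set I := Y ∩ X with hI
      set U := Y ∪ X with hU
      have hIX : I ⊆ X := Finset.inter_subset_right
      have hcards : I.card + U.card = 2 * X.card := by
        rw [hI, hU, Finset.card_inter_add_card_union, hYcard]; ring
      have hIcard : I.card ≤ X.card := Finset.card_le_card hIX
      have hIne : I.Nonempty := hnd
      have hIuniv : I ≠ Finset.univ := by
        intro hIu
        have : I.card = n := by rw [hIu, Finset.card_univ]
        omega
      have hUne : U.Nonempty := hne.mono Finset.subset_union_right
      have hUcard : U.card ≤ 2 * X.card := by omega
      have hUuniv : U ≠ Finset.univ := by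
        intro hUu
        have : U.card = n := by rw [hUu, Finset.card_univ]
        omega
      -- lower bounds
      have hminI : min (I.card : ℝ) ((n : ℝ) - I.card) = (I.card : ℝ) := by
        apply min_eq_left
        have : 2 * I.card ≤ n := by omega
        have := (Nat.cast_le (α := ℝ)).mpr this
        push_cast at this ⊢
        linarith
      have hminU : min (U.card : ℝ) ((n : ℝ) - U.card) = (U.card : ℝ) := by
        apply min_eq_left
        have : 2 * U.card ≤ n := by omega
        have := (Nat.cast_le (α := ℝ)).mpr this
        push_cast at this ⊢
        linarith
      have hbI : h * (I.card : ℝ) ≤ (eB Γ I : ℝ) := by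
        have := eB_ge Γ I hIne hIuniv
        rwa [hminI] at this
      have hbU : h * (U.card : ℝ) ≤ (eB Γ U : ℝ) := by
        have := eB_ge Γ U hUne hUuniv
        rwa [hminU] at this
      have hsub := eB_submod Γ Y X
      rw [← hI, ← hU, hYeB] at hsub
      have hsubR : (eB Γ I : ℝ) + (eB Γ U : ℝ) ≤ 2 * (h * X.card) := by
        have : ((eB Γ I + eB Γ U : ℕ) : ℝ) ≤ ((2 * eB Γ X : ℕ) : ℝ) := by
          exact_mod_cast (by omega : eB Γ I + eB Γ U ≤ 2 * eB Γ X)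
        push_cast at this
        rw [hmin] at this
        linarith
      have hcardsR : (I.card : ℝ) + (U.card : ℝ) = 2 * (X.card : ℝ) := by
        exact_mod_cast congrArg (fun m : ℕ => (m : ℝ)) hcards
      have hIexact : (eB Γ I : ℝ) = h * I.card := by nlinarith [hbI, hbU, hsubR, hcardsR]
      have hIlt : I.card < X.card := by
        rcases lt_or_eq_of_le hIcard with hlt | heq
        · exact hlt
        · exfalso
          have hIeqX : I = X := Finset.eq_of_subset_of_card_le hIX (le_of_eq heq.symm)
          have hXY : X ⊆ Y := by
            intro x hx
            have : x ∈ I := hIeqX.symm ▸ hx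
            exact (Finset.mem_inter.mp this).1
          exact hne' (Finset.eq_of_subset_of_card_le hXY (le_of_eq hYcard)).symm
      exact ih I.card (by omega) I rfl hIne (by omega) hIexact
    -- Step B: disjoint translates have no edges to X
    have stepB : ∀ g : G, Disjoint (gmul g X) X → epairs Γ (gmul g X) X = 0 := by
      intro g hdisj
      by_contra hep
      have hep1 : 1 ≤ epairs Γ (gmul g X) X := Nat.one_le_iff_ne_zero.mpr hep
      set Y := gmul g X with hY
      have hYcard : Y.card = X.card := card_gmul g X
      have hYeB : eB Γ Y = eB Γ X := eB_gmul S g X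
      set U := Y ∪ X with hU
      have hid := eB_union_of_disjoint Γ hdisj
      rw [← hU, hYeB] at hid
      have hUcard : U.card = 2 * X.card := by
        rw [hU, Finset.card_union_of_disjoint hdisj, hYcard]; ring
      have hUne : U.Nonempty := hne.mono Finset.subset_union_right
      have hUuniv : U ≠ Finset.univ := by
        intro hUu
        have : U.card = n := by rw [hUu, Finset.card_univ]
        omega
      have hminU : min (U.card : ℝ) ((n : ℝ) - U.card) = (U.card : ℝ) := by
        apply min_eq_left
        have : 2 * U.card ≤ n := by omega
        have := (Nat.cast_le (α := ℝ)).mpr this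
        push_cast at this ⊢
        linarith
      have hbU : h * (U.card : ℝ) ≤ (eB Γ U : ℝ) := by
        have := eB_ge Γ U hUne hUuniv
        rwa [hminU] at this
      have hidR : (eB Γ U : ℝ) + 2 * (epairs Γ Y X : ℝ) = 2 * (h * X.card) := by
        have : ((eB Γ U + 2 * epairs Γ Y X : ℕ) : ℝ) = ((2 * eB Γ X : ℕ) : ℝ) := by
          exact_mod_cast congrArg (fun m : ℕ => (m : ℝ)) (by omega : eB Γ U + 2 * epairs Γ Y X = 2 * eB Γ X)
        push_cast at this
        rw [hmin] at this
        linarith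
      have hUcardR : (U.card : ℝ) = 2 * (X.card : ℝ) := by
        exact_mod_cast congrArg (fun m : ℕ => (m : ℝ)) hUcard
      have hepR : (1 : ℝ) ≤ (epairs Γ Y X : ℝ) := by exact_mod_cast hep1
      nlinarith [hbU, hidR, hUcardR, hepR]
    -- Step C: X is closed under adjacency
    have hcl : ∀ a ∈ X, ∀ v, Γ.Adj a v → v ∈ X := by
      intro a ha v hadj
      by_contra hv
      set g := v * a⁻¹ with hg
      have hvY : v ∈ gmul g X := by
        rw [mem_gmul]
        have : g⁻¹ * v = a := by rw [hg]; group
        rw [this]; exact ha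
      have hYne : gmul g X ≠ X := fun hEq => hv (hEq ▸ hvY)
      have hdisj := (stepA g).resolve_left hYne
      have h0 := stepB g hdisj
      rw [epairs_eq_zero_iff] at h0
      exact h0 v hvY a ha hadj.symm
    have hXeq : X = Finset.univ := closed_eq_univ S hgen X hne hcl
    exact hXuniv hXeq

end NoSmall

section Split

variable {V : Type*} [Fintype V] [DecidableEq V] (Γ : SimpleGraph V)

lemma eB_split {A B C : Finset V} (hBC : B ∪ C = A) (hdisj : Disjoint B C)
    (hep : epairs Γ B C = 0) : eB Γ A = eB Γ B + eB Γ C := by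
  subst hBC
  have hd := Finset.disjoint_left.mp hdisj
  have hBcompl : Bᶜ = C ∪ (B ∪ C)ᶜ := by
    ext x
    simp only [Finset.mem_compl, Finset.mem_union]
    constructor
    · intro hx
      by_cases hc : x ∈ C
      · exact Or.inl hc
      · exact Or.inr (by simp [Finset.mem_compl, Finset.mem_union, hx, hc])
    · rintro (hc | hrest) hxB
      · exact hd hxB hc
      · tauto
  have hCcompl : Cᶜ = B ∪ (B ∪ C)ᶜ := by
    ext x
    simp only [Finset.mem_compl, Finset.mem_union]
    constructor
    · intro hx
      by_cases hb : x ∈ B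
      · exact Or.inl hb
      · exact Or.inr (by simp [Finset.mem_compl, Finset.mem_union, hx, hb])
    · rintro (hb | hrest) hxC
      · exact hd hb hxC
      · tauto
  have dC : Disjoint C (B ∪ C)ᶜ := by
    rw [Finset.disjoint_left]
    intro a h1 h2
    simp only [Finset.mem_compl, Finset.mem_union] at h2; tauto
  have dB : Disjoint B (B ∪ C)ᶜ := by
    rw [Finset.disjoint_left]
    intro a h1 h2
    simp only [Finset.mem_compl, Finset.mem_union] at h2; tauto
  have e0 : eB Γ (B ∪ C) = epairs Γ B (B ∪ C)ᶜ + epairs Γ C (B ∪ C)ᶜ := by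
    rw [eB, epairs_union_left Γ hdisj]
  have e1 : eB Γ B = epairs Γ B (B ∪ C)ᶜ := by
    rw [eB, hBcompl, epairs_union_right Γ dC, hep]
    omega
  have e2 : eB Γ C = epairs Γ C (B ∪ C)ᶜ := by
    rw [eB, hCcompl, epairs_union_right Γ dB, epairs_comm Γ C B, hep]
    omega
  omega

open Classical in
lemma connected_of_no_split (D : Finset V) (hne : D.Nonempty)
    (H : ∀ B C : Finset V, B ∪ C = D → Disjoint B C → B.Nonempty → C.Nonempty →
      epairs Γ B C = 0 → False) :
    (Γ.induce (D : Set V)).Connected := by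
  classical
  obtain ⟨d₀, hd₀⟩ := hne
  rw [SimpleGraph.connected_iff]
  refine ⟨?_, ⟨⟨d₀, Finset.mem_coe.mpr hd₀⟩⟩⟩
  intro u v
  by_contra hnr
  set B := D.filter (fun x =>
    ∃ hx : x ∈ (D : Set V), (Γ.induce (D : Set V)).Reachable u ⟨x, hx⟩) with hB
  set C := D \ B with hC
  have hBD : B ⊆ D := Finset.filter_subset _ _
  have hBC : B ∪ C = D := by rw [hC, Finset.union_sdiff_of_subset hBD]
  have hdisj : Disjoint B C := Finset.disjoint_sdiff
  have huB : (u : V) ∈ B := by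
    rw [hB, Finset.mem_filter]
    refine ⟨Finset.mem_coe.mp u.2, u.2, ?_⟩
    rw [Subtype.coe_eta]
  have hvC : (v : V) ∈ C := by
    rw [hC, Finset.mem_sdiff]
    refine ⟨Finset.mem_coe.mp v.2, fun hvB => ?_⟩
    rw [hB, Finset.mem_filter] at hvB
    obtain ⟨_, hx, hr⟩ := hvB
    rw [Subtype.coe_eta] at hr
    exact hnr hr
  have hep : epairs Γ B C = 0 := by
    rw [epairs_eq_zero_iff]
    intro x hxB y hyC hadj
    have hxD : x ∈ D := hBD hxB
    have hyD : y ∈ D := (Finset.mem_sdiff.mp hyC).1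
    have hyB : y ∉ B := (Finset.mem_sdiff.mp hyC).2
    apply hyB
    rw [hB, Finset.mem_filter] at hxB ⊢
    obtain ⟨_, hxS, hr⟩ := hxB
    refine ⟨hyD, Finset.mem_coe.mpr hyD, ?_⟩
    have hadj' : (Γ.induce (D : Set V)).Adj ⟨x, hxS⟩ ⟨y, Finset.mem_coe.mpr hyD⟩ := hadj
    exact hr.trans hadj'.reachable
  exact H B C hBC hdisj ⟨_, huB⟩ ⟨_, hvC⟩ hep

end Split

/-- if `X` is the Cayley graph of a finite group with respect to a finite
generating set, and `A` is a nonempty subset of vertices with `|∂A|/|A| = h(X)` and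
`|A| ≤ |V(X)|/2`, then the subgraphs induced on `A` and on its complement are
connected. -/
theorem cheeger_minimizer_induced_connected {G : Type*} [Group G] [Fintype G]
    (S : Finset G) (hgen : Subgroup.closure (S : Set G) = ⊤)
    (A : Finset G) (hA : A.Nonempty)
    (hhalf : (A.card : ℝ) ≤ (Fintype.card G : ℝ) / 2)
    (hach : ((edgeBd (cayley G (S : Set G)) A).card : ℝ) / (A.card : ℝ)
      = cheeger (cayley G (S : Set G))) :
    ((cayley G (S : Set G)).induce (A : Set G)).Connected ∧
      ((cayley G (S : Set G)).induce ((A : Set G)ᶜ)).Connected := by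
  classical
  set Γ := cayley G (S : Set G) with hΓ
  set n := Fintype.card G with hn
  set h := cheeger Γ with hh
  have ha1 : 1 ≤ A.card := hA.card_pos
  have h2a : 2 * A.card ≤ n := by
    have h2 : (2 : ℝ) * A.card ≤ (n : ℝ) := by linarith
    exact_mod_cast h2
  have hAlt : A.card < n := by omega
  have hAuniv : A ≠ Finset.univ := by
    intro hAu
    have : A.card = n := by rw [hAu, Finset.card_univ]
    omega
  have hcardc : A.card + Aᶜ.card = n := by
    rw [hn, ← Finset.card_univ]
    rw [Finset.card_add_card_compl, Finset.card_univ]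
  have hAc_ne : Aᶜ.Nonempty := Finset.card_pos.mp (by omega)
  have hApos : (0 : ℝ) < (A.card : ℝ) := by exact_mod_cast ha1
  have hbd : ((eB Γ A : ℕ) : ℝ) = h * A.card := by
    have e1 : ((edgeBd Γ A).card : ℝ) = (eB Γ A : ℝ) := by
      exact_mod_cast congrArg (fun m : ℕ => (m : ℝ)) (edgeBd_card_eq Γ A)
    rw [e1] at hach
    field_simp at hach
    linarith [hach]
  have hnonneg : (0 : ℝ) ≤ h := by
    rw [← hach]
    positivity
  have hpos : 0 < h := by
    rcases lt_or_eq_of_le hnonneg with hlt | heq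
    · exact hlt
    · exfalso
      have : ((eB Γ A : ℕ) : ℝ) = 0 := by rw [hbd, ← heq]; ring
      have hz : eB Γ A = 0 := by exact_mod_cast this
      exact hAuniv (eB_zero_univ S hgen A hA hz)
  -- common bound tool
  have bound : ∀ B : Finset G, B.Nonempty → B ≠ Finset.univ → 2 * B.card ≤ n →
      h * (B.card : ℝ) ≤ (eB Γ B : ℝ) := by
    intro B hBne hBuniv h2B
    have hmin : min (B.card : ℝ) ((n : ℝ) - B.card) = (B.card : ℝ) := by
      apply min_eq_left
      have := (Nat.cast_le (α := ℝ)).mpr h2B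
      push_cast at this
      linarith
    have := eB_ge Γ B hBne hBuniv
    rwa [hmin] at this
  constructor
  · -- the induced subgraph on A
    apply connected_of_no_split Γ A hA
    intro B C hBC hdisj hBne hCne hep0
    have hcardBC : B.card + C.card = A.card := by
      have := Finset.card_union_of_disjoint hdisj
      rw [hBC] at this
      omega
    have hsplit : eB Γ A = eB Γ B + eB Γ C := eB_split Γ hBC hdisj hep0
    have hBsub : B ⊆ A := hBC ▸ Finset.subset_union_left
    have hCsub : C ⊆ A := hBC ▸ Finset.subset_union_right
    have hBuniv : B ≠ Finset.univ := by
      intro hBu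
      have : B.card = n := by rw [hBu, Finset.card_univ]
      have := Finset.card_le_card hBsub
      omega
    have hCuniv : C ≠ Finset.univ := by
      intro hCu
      have : C.card = n := by rw [hCu, Finset.card_univ]
      have := Finset.card_le_card hCsub
      omega
    have hbB := bound B hBne hBuniv (by omega)
    have hbC := bound C hCne hCuniv (by omega)
    have hsum : (eB Γ B : ℝ) + (eB Γ C : ℝ) = h * B.card + h * C.card := by
      have hcast : (eB Γ B : ℝ) + (eB Γ C : ℝ) = ((eB Γ A : ℕ) : ℝ) := by
        exact_mod_cast congrArg (fun m : ℕ => (m : ℝ)) hsplit.symm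
      have hc2 : (B.card : ℝ) + (C.card : ℝ) = (A.card : ℝ) := by
        exact_mod_cast congrArg (fun m : ℕ => (m : ℝ)) hcardBC
      rw [hcast, hbd, ← hc2]
      ring
    have heB : (eB Γ B : ℝ) = h * B.card := by linarith
    have heC : (eB Γ C : ℝ) = h * C.card := by linarith
    rcases le_total B.card C.card with hle | hle
    · exact no_small S hgen hpos B.card B rfl hBne (by omega) heB
    · exact no_small S hgen hpos C.card C rfl hCne (by omega) heC
  · -- the induced subgraph on the complement
    rw [← Finset.coe_compl]
    apply connected_of_no_split Γ Aᶜ hAc_ne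
    intro B C hBC hdisj hBne hCne hep0
    have hbdc : eB Γ Aᶜ = eB Γ A := by
      rw [eB, eB, compl_compl, epairs_comm]
    have hcardBC : B.card + C.card = Aᶜ.card := by
      have := Finset.card_union_of_disjoint hdisj
      rw [hBC] at this
      omega
    have hsplit : eB Γ Aᶜ = eB Γ B + eB Γ C := eB_split Γ hBC hdisj hep0
    have hBsub : B ⊆ Aᶜ := hBC ▸ Finset.subset_union_left
    have hCsub : C ⊆ Aᶜ := hBC ▸ Finset.subset_union_right
    have hBcard : B.card ≤ Aᶜ.card := Finset.card_le_card hBsub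
    have hCcard : C.card ≤ Aᶜ.card := Finset.card_le_card hCsub
    have hBuniv : B ≠ Finset.univ := by
      intro hBu
      have : B.card = n := by rw [hBu, Finset.card_univ]
      omega
    have hCuniv : C ≠ Finset.univ := by
      intro hCu
      have : C.card = n := by rw [hCu, Finset.card_univ]
      omega
    have hsum : (eB Γ B : ℝ) + (eB Γ C : ℝ) = h * A.card := by
      have hcast : (eB Γ B : ℝ) + (eB Γ C : ℝ) = ((eB Γ Aᶜ : ℕ) : ℝ) := by
        exact_mod_cast congrArg (fun m : ℕ => (m : ℝ)) hsplit.symm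
      rw [hcast]
      rw [show eB Γ Aᶜ = eB Γ A from hbdc]
      exact hbd
    -- symmetric "key" step
    have key : ∀ B' C' : Finset G, B'.Nonempty → C'.Nonempty →
        B' ≠ Finset.univ → C' ≠ Finset.univ →
        B'.card + C'.card = Aᶜ.card → B'.card ≤ C'.card →
        (eB Γ B' : ℝ) + (eB Γ C' : ℝ) = h * A.card →
        ((eB Γ B' : ℝ) ≥ h * B'.card) → False := by
      intro B' C' hB'ne hC'ne hB'u hC'u hcards hle hsum' hbB'
      have hb2 : 2 * B'.card ≤ n := by omega
      have hleR : (B'.card : ℝ) ≤ (C'.card : ℝ) := by exact_mod_cast hle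
      by_cases hc2 : 2 * C'.card ≤ n
      · -- both parts small
        have hbC' := bound C' hC'ne hC'u hc2
        have hc2R : (B'.card : ℝ) + (C'.card : ℝ) = (Aᶜ.card : ℝ) := by exact_mod_cast hcards
        have hcompl : (Aᶜ.card : ℝ) = (n : ℝ) - A.card := by
          have hx : (A.card : ℝ) + (Aᶜ.card : ℝ) = (n : ℝ) := by exact_mod_cast hcardc
          linarith
        have h2aR : 2 * (A.card : ℝ) ≤ (n : ℝ) := by exact_mod_cast h2a
        have hineq : h * ((n : ℝ) - (A.card : ℝ)) ≤ h * (A.card : ℝ) := by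
          have e : h * (B'.card : ℝ) + h * (C'.card : ℝ) = h * ((n : ℝ) - A.card) := by
            rw [← hcompl, ← hc2R]; ring
          linarith
        have haeq : (n : ℝ) - (A.card : ℝ) = (A.card : ℝ) := by
          have := (mul_le_mul_iff_right₀ hpos).mp hineq
          linarith
        have heB' : (eB Γ B' : ℝ) = h * B'.card := by
          have e : h * (B'.card : ℝ) + h * (C'.card : ℝ) = h * (A.card : ℝ) := by
            rw [← haeq, ← hcompl, ← hc2R]; ring
          linarith
        have h4 : 4 * B'.card ≤ n := by
          have h4R : 4 * (B'.card : ℝ) ≤ (n : ℝ) := by linarith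
          exact_mod_cast h4R
        exact no_small S hgen hpos B'.card B' rfl hB'ne h4 heB'
      · -- C' is large
        push_neg at hc2
        have hminC : min (C'.card : ℝ) ((n : ℝ) - C'.card) = (n : ℝ) - C'.card := by
          apply min_eq_right
          have hx : (n : ℝ) < 2 * (C'.card : ℝ) := by exact_mod_cast hc2
          linarith
        have hbC' : h * ((n : ℝ) - C'.card) ≤ (eB Γ C' : ℝ) := by
          have := eB_ge Γ C' hC'ne hC'u
          rwa [hminC] at this
        have hrel : (n : ℝ) - (C'.card : ℝ) = (A.card : ℝ) + B'.card := by
          have hx : A.card + (B'.card + C'.card) = n := by omega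
          have hxR : (A.card : ℝ) + ((B'.card : ℝ) + (C'.card : ℝ)) = (n : ℝ) := by
            exact_mod_cast hx
          linarith
        have hB'pos : (0 : ℝ) < (B'.card : ℝ) := by exact_mod_cast hB'ne.card_pos
        have e : h * ((n : ℝ) - C'.card) = h * (A.card : ℝ) + h * (B'.card : ℝ) := by
          rw [hrel]; ring
        have hhb : 0 < h * (B'.card : ℝ) := mul_pos hpos hB'pos
        linarith
    rcases le_total B.card C.card with hle | hle
    · exact key B C hBne hCne hBuniv hCuniv hcardBC hle hsum (bound B hBne hBuniv (by omega))
    · exact key C B hCne hBne hCuniv hBuniv (by omega) hle (by linarith) (bound C hCne hCuniv (by omega))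
end

section
/- Let G be a finite group of order n, and let C ⊆ G be a subset such that for every 4-tuple (g₁,g₂,g₃,g₄) ∈ G⁴ there exist indices i ≠ j with g_iC ∩ g_jC ≠ ∅. Then n ≤ 6|C|². -/
/-- let `G` be a finite group of order `n` and `C ⊆ G` such that among any
four left translates `g₁C, g₂C, g₃C, g₄C` two must intersect.  Then `n ≤ 6|C|²`. -/
theorem card_le_of_no_four_disjoint_translates {G : Type*} [Group G] [Fintype G]
    [DecidableEq G] (C : Finset G)
    (h : ∀ g : Fin 4 → G, ∃ i j : Fin 4, i ≠ j ∧
      ∃ c₁ ∈ C, ∃ c₂ ∈ C, g i * c₁ = g j * c₂) :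
    Fintype.card G ≤ 6 * C.card ^ 2 := by
  classical
  set n := Fintype.card G with hn
  set D : Finset G := Finset.image₂ (fun a b => a * b⁻¹) C C with hD
  have hDcard : D.card ≤ C.card ^ 2 := by
    calc D.card ≤ C.card * C.card := Finset.card_image₂_le _ _ _
    _ = C.card ^ 2 := (sq _).symm
  -- card of each "bad pair" set
  have hS : ∀ i j : Fin 4, i ≠ j →
      (Finset.univ.filter (fun g : Fin 4 → G => (g j)⁻¹ * g i ∈ D)).card
        = D.card * n ^ 3 := by
    intro i j hij
    have hji : j ≠ i := hij.symm
    let e : (Fin 4 → G) ≃ (Fin 4 → G) :=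
      { toFun := fun g => Function.update g i (g j * g i)
        invFun := fun g => Function.update g i ((g j)⁻¹ * g i)
        left_inv := by
          intro g; funext k
          by_cases hk : k = i
          · subst hk; simp [Function.update_of_ne hji]
          · simp [Function.update_of_ne hk]
        right_inv := by
          intro g; funext k
          by_cases hk : k = i
          · subst hk; simp [Function.update_of_ne hji]
          · simp [Function.update_of_ne hk] }
    have hmap : (Finset.univ.filter (fun g : Fin 4 → G => (g j)⁻¹ * g i ∈ D))
        = (Finset.univ.filter (fun g : Fin 4 → G => g i ∈ D)).map e.toEmbedding := by
      ext g
      simp only [Finset.mem_map, Finset.mem_filter, Finset.mem_univ, true_and,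
        Equiv.coe_toEmbedding]
      constructor
      · intro hg
        refine ⟨e.symm g, ?_, e.apply_symm_apply g⟩
        show (Function.update g i ((g j)⁻¹ * g i)) i ∈ D
        simpa using hg
      · rintro ⟨g', hg', rfl⟩
        show ((Function.update g' i (g' j * g' i)) j)⁻¹ *
          (Function.update g' i (g' j * g' i)) i ∈ D
        simpa [Function.update_of_ne hji, mul_assoc] using hg'
    have hpi : (Finset.univ.filter (fun g : Fin 4 → G => g i ∈ D))
        = Fintype.piFinset (fun k => if k = i then D else Finset.univ) := by
      ext g
      simp only [Finset.mem_filter, Finset.mem_univ, true_and, Fintype.mem_piFinset]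
      constructor
      · intro hg k
        by_cases hk : k = i
        · subst hk; simpa using hg
        · simp [hk]
      · intro hg
        have := hg i
        simpa using this
    rw [hmap, Finset.card_map, hpi, Fintype.card_piFinset]
    have := Finset.prod_eq_mul_prod_sdiff_singleton_of_mem (Finset.mem_univ i)
      (fun k => (if k = i then D else (Finset.univ : Finset G)).card)
    rw [this]
    have h1 : (if i = i then D else (Finset.univ : Finset G)).card = D.card := by simp
    have h2 : ∏ k ∈ Finset.univ \ {i},
        (if k = i then D else (Finset.univ : Finset G)).card = n ^ 3 := by
      have hcard3 : (Finset.univ \ ({i} : Finset (Fin 4))).card = 3 := by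
        rw [Finset.card_sdiff_of_subset (by simp)]
        simp
      rw [Finset.prod_congr rfl (fun k hk => ?_), Finset.prod_const, hcard3]
      have hk' : k ≠ i := by
        simp only [Finset.mem_sdiff, Finset.mem_singleton] at hk
        exact hk.2
      simp [hk', hn, Finset.card_univ]
    rw [h1, h2]
  -- the six pairs
  let P : Finset (Fin 4 × Fin 4) := {(0,1),(0,2),(0,3),(1,2),(1,3),(2,3)}
  have hPne : ∀ p ∈ P, p.1 ≠ p.2 := by decide
  have hPcard : P.card = 6 := by decide
  have hpair : ∀ i j : Fin 4, i ≠ j → ((i, j) ∈ P ∨ (j, i) ∈ P) := by decide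
  have hcover : (Finset.univ : Finset (Fin 4 → G)) ⊆
      P.biUnion (fun p => Finset.univ.filter
        (fun g : Fin 4 → G => (g p.2)⁻¹ * g p.1 ∈ D)) := by
    intro g _
    obtain ⟨i, j, hij, c₁, hc₁, c₂, hc₂, hgc⟩ := h g
    have h1 : (g j)⁻¹ * g i ∈ D := by
      have : (g j)⁻¹ * g i = c₂ * c₁⁻¹ := by
        rw [inv_mul_eq_iff_eq_mul, ← mul_assoc, ← hgc, mul_assoc]
        simp
      rw [this]
      exact Finset.mem_image₂.2 ⟨c₂, hc₂, c₁, hc₁, rfl⟩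
    have h2 : (g i)⁻¹ * g j ∈ D := by
      have : (g i)⁻¹ * g j = c₁ * c₂⁻¹ := by
        rw [inv_mul_eq_iff_eq_mul, ← mul_assoc, hgc, mul_assoc]
        simp
      rw [this]
      exact Finset.mem_image₂.2 ⟨c₁, hc₁, c₂, hc₂, rfl⟩
    have hp : (i, j) ∈ P ∨ (j, i) ∈ P := hpair i j hij
    rcases hp with hp | hp
    · exact Finset.mem_biUnion.2 ⟨(i, j), hp,
        Finset.mem_filter.2 ⟨Finset.mem_univ _, h1⟩⟩
    · exact Finset.mem_biUnion.2 ⟨(j, i), hp,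
        Finset.mem_filter.2 ⟨Finset.mem_univ _, h2⟩⟩
  have hmain : n ^ 4 ≤ 6 * D.card * n ^ 3 := by
    calc n ^ 4 = Fintype.card (Fin 4 → G) := by
          rw [Fintype.card_fun]; simp [hn]
    _ = (Finset.univ : Finset (Fin 4 → G)).card := Finset.card_univ.symm
    _ ≤ (P.biUnion (fun p => Finset.univ.filter
          (fun g : Fin 4 → G => (g p.2)⁻¹ * g p.1 ∈ D))).card :=
        Finset.card_le_card hcover
    _ ≤ ∑ p ∈ P, (Finset.univ.filter
          (fun g : Fin 4 → G => (g p.2)⁻¹ * g p.1 ∈ D)).card :=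
        Finset.card_biUnion_le
    _ = ∑ p ∈ P, D.card * n ^ 3 :=
        Finset.sum_congr rfl (fun p hp => hS p.1 p.2 (hPne p hp))
    _ = 6 * D.card * n ^ 3 := by
        rw [Finset.sum_const, hPcard, smul_eq_mul, mul_assoc]
  have hn3 : 0 < n ^ 3 := pow_pos Fintype.card_pos 3
  have : n ≤ 6 * D.card := by
    have h4 : n * n ^ 3 = n ^ 4 := by ring
    exact Nat.le_of_mul_le_mul_right (by rw [h4]; exact hmain) hn3
  calc n ≤ 6 * D.card := this
  _ ≤ 6 * C.card ^ 2 := by omega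
end
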